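/- Let ψ : T → ℝ/ℤ be a 2-linear function on a finite abelian group T. If ψ restricted to T^⊥ is not identically zero (ψ is not tame), then |G(ψ)| = 0; if ψ restricted to T^⊥ is identically zero (ψ is tame), then |G(ψ)| = √(|T^⊥|·|T|). -/

import Mathlib

noncomputable def e (x : AddCircle (1 : ℝ)) : ℂ := AddCircle.toCircle x

def bform {T M : Type*} [AddCommGroup T] [AddCommGroup M] (ψ : T → M) (x y : T) : M :=
  ψ (x + y) - ψ x - ψ y

def IsTwoLinear {T M : Type*} [AddCommGroup T] [AddCommGroup M] (ψ : T → M) : Prop :=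
  ∀ x y z : T, bform ψ (x + y) z = bform ψ x z + bform ψ y z

/-! Expanding `|G|²` for `G = ∑ₜ e(ψ t)` and substituting `u = t + s` gives
`|G|² = ∑ₛ e(ψ s) ∑ₜ e(b(s, t))`. For fixed `s` the inner sum is over the character
`t ↦ e(b(s, t))`, so it is `|T|` for `s ∈ T^⊥` and `0` otherwise; hence
`|G|² = |T| ∑_{s ∈ T^⊥} e(ψ s)`. On `T^⊥` the function `ψ` is additive, so the last sum is
again a character sum: `|T^⊥|` if `ψ` is tame and `0` otherwise. -/

open Finset ComplexConjugate

section Bform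

variable {T M : Type*} [AddCommGroup T] [AddCommGroup M]

lemma bform_comm (ψ : T → M) (x y : T) : bform ψ x y = bform ψ y x := by
  simp only [bform, add_comm x y]
  abel

lemma map_add_eq_bform_add (ψ : T → M) (x y : T) : ψ (x + y) = ψ x + ψ y + bform ψ x y := by
  simp only [bform]
  abel

namespace IsTwoLinear

variable {ψ : T → M} (hψ : IsTwoLinear ψ)
include hψ

lemma bform_add_right (x y z : T) : bform ψ x (y + z) = bform ψ x y + bform ψ x z := by
  simp only [bform_comm ψ x]
  exact hψ y z x

def bformHom : T →+ T →+ M :=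
  AddMonoidHom.mk' (fun t ↦ AddMonoidHom.mk' (bform ψ t) (hψ.bform_add_right t))
    fun x y ↦ AddMonoidHom.ext (hψ x y)

@[simp]
lemma bformHom_apply (t s : T) : hψ.bformHom t s = bform ψ t s := rfl

/-- `T^⊥`, the radical of `b = bform ψ`. -/
def radical : AddSubgroup T := hψ.bformHom.ker

lemma mem_radical {t : T} : t ∈ hψ.radical ↔ ∀ s, bform ψ t s = 0 := by
  simp [radical, AddMonoidHom.ext_iff]

lemma map_add_of_mem_radical {t : T} (ht : t ∈ hψ.radical) (s : T) : ψ (t + s) = ψ t + ψ s := by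
  rw [map_add_eq_bform_add ψ, hψ.mem_radical.mp ht, add_zero]

def radicalHom : hψ.radical →+ M :=
  AddMonoidHom.mk' (fun t ↦ ψ t) fun a b ↦ hψ.map_add_of_mem_radical a.2 b

@[simp]
lemma radicalHom_apply (t : hψ.radical) : hψ.radicalHom t = ψ t := rfl

lemma radicalHom_eq_zero_iff :
    hψ.radicalHom = 0 ↔ ∀ t, (∀ s, bform ψ t s = 0) → ψ t = 0 := by
  simp [AddMonoidHom.ext_iff, radicalHom, ← hψ.mem_radical]

end IsTwoLinear

end Bform

noncomputable def eAddChar : AddChar (AddCircle (1 : ℝ)) ℂ :=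
  Circle.coeHom.compAddChar AddCircle.toCircle_addChar

@[simp]
lemma eAddChar_apply (x : AddCircle (1 : ℝ)) : eAddChar x = e x := rfl

lemma e_injective : Function.Injective e :=
  Circle.coe_injective.comp (AddCircle.injective_toCircle one_ne_zero)

lemma conj_e (x : AddCircle (1 : ℝ)) : conj (e x) = e (-x) := by
  rw [e, e, AddCircle.toCircle_neg, Circle.coe_inv_eq_conj]

lemma e_add (x y : AddCircle (1 : ℝ)) : e (x + y) = e x * e y :=
  eAddChar.map_add_eq_mul x y

lemma eAddChar_compAddMonoidHom_eq_zero_iff {A : Type*} [AddMonoid A] (f : A →+ AddCircle (1 : ℝ)) :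
    eAddChar.compAddMonoidHom f = 0 ↔ f = 0 := by
  have h0 : eAddChar.compAddMonoidHom (0 : A →+ AddCircle (1 : ℝ)) = 0 := by ext; simp
  rw [← h0, (eAddChar.compAddMonoidHom_injective_right e_injective).eq_iff]

section GaussSum

open scoped Classical

variable {T : Type*} [AddCommGroup T] [Fintype T] {ψ : T → AddCircle (1 : ℝ)}

namespace IsTwoLinear

variable (hψ : IsTwoLinear ψ)
include hψ

lemma sum_e_bform_eq_ite (s : T) :
    ∑ t, e (bform ψ s t) = if s ∈ hψ.radical then (Fintype.card T : ℂ) else 0 := by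
  have h := AddChar.sum_eq_ite (eAddChar.compAddMonoidHom (hψ.bformHom s))
  simpa only [eAddChar_compAddMonoidHom_eq_zero_iff, AddChar.compAddMonoidHom_apply,
    bformHom_apply, eAddChar_apply, AddMonoidHom.ext_iff, AddMonoidHom.zero_apply,
    ← hψ.mem_radical] using h

lemma sum_radical_e_eq_ite :
    ∑ s : hψ.radical, e (ψ s) =
      if ∀ t, (∀ s, bform ψ t s = 0) → ψ t = 0 then (Nat.card hψ.radical : ℂ) else 0 := by
  have h := AddChar.sum_eq_ite (eAddChar.compAddMonoidHom hψ.radicalHom)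
  simpa only [eAddChar_compAddMonoidHom_eq_zero_iff, hψ.radicalHom_eq_zero_iff,
    Nat.card_eq_fintype_card, AddChar.compAddMonoidHom_apply, radicalHom_apply,
    eAddChar_apply] using h

lemma conj_gaussSum_mul_gaussSum :
    conj (∑ t, e (ψ t)) * ∑ t, e (ψ t) = Fintype.card T * ∑ s : hψ.radical, e (ψ s) := by
  calc conj (∑ t, e (ψ t)) * ∑ t, e (ψ t)
      = ∑ t, ∑ s, e (-ψ t) * e (ψ (t + s)) := by
        simp only [map_sum, conj_e, sum_mul_sum]
        exact sum_congr rfl fun t _ ↦ (Fintype.sum_equiv (Equiv.addLeft t) _ _ fun _ ↦ rfl).symm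
    _ = ∑ t, ∑ s, e (ψ s) * e (bform ψ s t) := by
        refine sum_congr rfl fun t _ ↦ sum_congr rfl fun s _ ↦ ?_
        rw [← e_add, ← e_add, map_add_eq_bform_add ψ, bform_comm ψ t]
        abel_nf
    _ = ∑ s, e (ψ s) * if s ∈ hψ.radical then (Fintype.card T : ℂ) else 0 := by
        rw [sum_comm]
        simp only [← mul_sum, hψ.sum_e_bform_eq_ite]
    _ = Fintype.card T * ∑ s : hψ.radical, e (ψ s) := by
        rw [mul_sum, ← sum_subtype {s | s ∈ hψ.radical} (by simp)
          fun s ↦ (Fintype.card T : ℂ) * e (ψ s), sum_filter]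
        simp only [mul_ite, mul_zero, mul_comm]

end IsTwoLinear

end GaussSum

/-- For a 2-linear `ψ` on a finite abelian group `T`, with
`T^⊥ = {t | ∀ s, b(t,s) = 0}`: if `ψ|_{T^⊥} ≠ 0` (not tame) then `|G(ψ)| = 0`;
if `ψ|_{T^⊥} = 0` (tame) then `|G(ψ)| = √(|T^⊥|·|T|)`. -/
theorem gauss_sum_magnitude {T : Type*} [AddCommGroup T] [Fintype T]
    (ψ : T → AddCircle (1 : ℝ)) (hψ : IsTwoLinear ψ) :
    (¬ (∀ t : T, (∀ s : T, bform ψ t s = 0) → ψ t = 0) →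
      ‖∑ t : T, e (ψ t)‖ = 0) ∧
    ((∀ t : T, (∀ s : T, bform ψ t s = 0) → ψ t = 0) →
      ‖∑ t : T, e (ψ t)‖ =
        Real.sqrt ((Nat.card {t : T // ∀ s : T, bform ψ t s = 0}) *
          (Fintype.card T))) := by
  classical
  have key := hψ.conj_gaussSum_mul_gaussSum
  rw [hψ.sum_radical_e_eq_ite, Complex.conj_mul'] at key
  have card_radical : Nat.card {t : T // ∀ s : T, bform ψ t s = 0} = Nat.card hψ.radical :=
    Nat.card_congr (Equiv.subtypeEquivRight fun _ ↦ hψ.mem_radical.symm)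
  constructor
  · intro hnot_tame
    rw [if_neg hnot_tame, mul_zero] at key
    exact pow_eq_zero_iff two_ne_zero |>.mp (by exact_mod_cast key)
  · intro htame
    rw [if_pos htame] at key
    rw [card_radical, ← Real.sqrt_sq (norm_nonneg _), mul_comm]
    exact congrArg Real.sqrt (by exact_mod_cast key)
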